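/- arXiv:1906.00854 — 2 statements merged into one kernel-verified Lean document; each statement's English description precedes it below -/
import Mathlib

section
/- For n ≥ 2 identical linear servers and any attack strength α ≥ 0 and any machine penetration level r ∈ [0, n], every team equilibrium x̃ satisfies C^α(x̃) ≤ 1 + α/n; that is, the system exhibits weak emergent security against the unresponsive baseline profile x̄ = (1, …, 1) whose cost is C^α(x̄) = 1 + α/n. -/
open Finset

/-- System cost `C^α(x) = (1/n) ∑ᵢ xᵢ τᵢ(xᵢ) + α x₁ / n` (server 1 is index 0). -/
noncomputable def cost (n : ℕ) [NeZero n] (τ : Fin n → ℝ → ℝ) (α : ℝ) (x : Fin n → ℝ) : ℝ :=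
  (∑ i, x i * τ i (x i)) / (n : ℝ) + α * x 0 / (n : ℝ)

/-- Attacked delay functions: `τ₁^α = τ₁ + α`, `τᵢ^α = τᵢ` for `i > 1`. -/
noncomputable def tauA (n : ℕ) [NeZero n] (τ : Fin n → ℝ → ℝ) (α : ℝ) (i : Fin n) (z : ℝ) : ℝ :=
  τ i z + if i = 0 then α else 0

/-- A (partial) scheduling profile of total mass `mass`: nonnegative with entries summing to `mass`. -/
def IsProfile (n : ℕ) (mass : ℝ) (x : Fin n → ℝ) : Prop :=
  (∀ i, 0 ≤ x i) ∧ ∑ i, x i = mass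

/-- Team equilibrium: the selfish mass `n - ∑ r k` is scheduled by `xs`, machine `k`
schedules mass `r k` via `xk k`; every machine schedules globally optimally given the
others, and every selfish job is on a minimum-delay server. -/
def IsTeamEq (n m : ℕ) [NeZero n] (τ : Fin n → ℝ → ℝ) (α : ℝ) (r : Fin m → ℝ)
    (xs : Fin n → ℝ) (xk : Fin m → Fin n → ℝ) : Prop :=
  IsProfile n ((n : ℝ) - ∑ k, r k) xs ∧
  (∀ k, IsProfile n (r k) (xk k)) ∧
  (∀ k, ∀ y : Fin n → ℝ, IsProfile n (r k) y →
    cost n τ α (xs + ∑ j, xk j) ≤ cost n τ α (xs + y + ∑ j ∈ univ.erase k, xk j)) ∧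
  (∀ i, 0 < xs i → ∀ j,
    tauA n τ α i ((xs + ∑ l, xk l) i) ≤ tauA n τ α j ((xs + ∑ l, xk l) j))

/-- Identical linear delay functions `τᵢ(x) = x`. -/
def lin (n : ℕ) : Fin n → ℝ → ℝ := fun _ z => z

/-!
If `X` is the total load of a team equilibrium, then `X i ≤ X j + α·[j = 0]` whenever `X i > 0`:
selfish jobs sit on servers of minimal attacked delay `X i + α·[i = 0]`, and moving a small mass
`ε` of a machine from `i` to `j` changes the cost by `ε (μ j - μ i + 2ε) / n`, where
`μ = 2 X + α·[· = 0]` is the marginal cost, so machines only use servers of minimal marginal cost.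
Hence all unattacked servers carry a common load `c`, the attacked one carries
`a = n - (n - 1) c` with `a ≤ c ≤ a + α`, and then
`n C^α(X) - (n + α) = (n - 1)(c - 1)(n (c - 1) - α) ≤ 0`.
-/

open Filter Topology

lemma nonneg_of_forall_mem_Ioc_nonneg_add_mul {d c δ : ℝ} (hδ : 0 < δ)
    (h : ∀ ε, 0 < ε → ε ≤ δ → 0 ≤ d + c * ε) : 0 ≤ d := by
  have hlim : Tendsto (fun ε => d + c * ε) (𝓝[>] 0) (𝓝 d) := by
    have : Continuous (fun ε : ℝ => d + c * ε) := by fun_prop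
    simpa using (this.tendsto 0).mono_left nhdsWithin_le_nhds
  exact ge_of_tendsto hlim (eventually_of_mem (Ioc_mem_nhdsGT hδ) fun ε hε => h ε hε.1 hε.2)

lemma sum_eq_card_mul_add_of_forall_ne {ι : Type*} [Fintype ι] (f : ι → ℝ) (i₀ : ι) {c : ℝ}
    (h : ∀ j ≠ i₀, f j = c) : ∑ j, f j = Fintype.card ι * c + (f i₀ - c) := by
  calc ∑ j, f j = ∑ j, (c + (f j - c)) := Finset.sum_congr rfl fun j _ => by ring
    _ = Fintype.card ι * c + (f i₀ - c) := by
      rw [Finset.sum_add_distrib,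
        Fintype.sum_eq_single (f := fun j => f j - c) i₀ fun j hj => by simp [h j hj]]
      simp

section MoveMass

variable {ι : Type*} [DecidableEq ι]

def moveMass (i j : ι) (ε : ℝ) (x : ι → ℝ) : ι → ℝ := x + Pi.single j ε - Pi.single i ε

lemma moveMass_apply (i j : ι) (ε : ℝ) (x : ι → ℝ) (l : ι) :
    moveMass i j ε x l = x l + (Pi.single j ε : ι → ℝ) l - (Pi.single i ε : ι → ℝ) l := rfl

variable [Fintype ι]

lemma sum_moveMass (i j : ι) (ε : ℝ) (x : ι → ℝ) : ∑ l, moveMass i j ε x l = ∑ l, x l := by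
  simp [moveMass_apply, Finset.sum_add_distrib, Finset.sum_sub_distrib]

lemma sum_moveMass_mul_add (x a : ι → ℝ) {i j : ι} (hij : i ≠ j) (ε : ℝ) :
    ∑ l, moveMass i j ε x l * (moveMass i j ε x l + a l)
      = ∑ l, x l * (x l + a l) + ε * ((2 * x j + a j) - (2 * x i + a i) + 2 * ε) := by
  have hpoint : ∀ l, moveMass i j ε x l * (moveMass i j ε x l + a l)
      = x l * (x l + a l) + (Pi.single j (ε * (2 * x j + a j) + ε ^ 2) : ι → ℝ) l
        + (Pi.single i (-(ε * (2 * x i + a i)) + ε ^ 2) : ι → ℝ) l := by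
    intro l
    by_cases hj : l = j
    · subst hj
      simp only [moveMass_apply, Pi.single_eq_same, Pi.single_eq_of_ne hij.symm, sub_zero, add_zero]
      ring
    by_cases hi : l = i
    · subst hi
      simp only [moveMass_apply, Pi.single_eq_same, Pi.single_eq_of_ne hij, add_zero]
      ring
    · simp [moveMass_apply, hi, hj]
  simp only [hpoint, Finset.sum_add_distrib, sum_pi_single', mem_univ, if_true]
  ring

end MoveMass

lemma two_level_bound {N a c α : ℝ} (hN : 1 ≤ N) (hsum : N * c + (a - c) = N) (hac : a ≤ c)
    (hca : c ≤ a + α) : N * (c * c) + (a * (a + α) - c * c) ≤ N + α := by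
  have hc : 1 ≤ c := by nlinarith
  have ha : a = N - N * c + c := by linarith
  subst ha
  have hgap : 0 ≤ N + α - N * c := by linarith
  nlinarith [mul_nonneg (mul_nonneg (sub_nonneg.2 hN) (sub_nonneg.2 hc)) hgap]

lemma IsProfile.moveMass {n : ℕ} {mass ε : ℝ} {x : Fin n → ℝ} (hx : IsProfile n mass x)
    {i j : Fin n} (hε : 0 ≤ ε) (hεi : ε ≤ x i) : IsProfile n mass (moveMass i j ε x) := by
  refine ⟨fun l => ?_, by rw [sum_moveMass, hx.2]⟩
  simp only [moveMass_apply, Pi.single_apply]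
  split_ifs with hj hi hi <;> (try subst hi) <;> linarith [hx.1 l]

section Servers

variable {n m : ℕ} [NeZero n] {α : ℝ}

/-- The derivative of `z ↦ z τᵢ^α(z)` at `z = x i` for linear delays. -/
def marginalCost (α : ℝ) (x : Fin n → ℝ) (i : Fin n) : ℝ :=
  2 * x i + (Pi.single 0 α : Fin n → ℝ) i

def IsLoadBalanced (α : ℝ) (X : Fin n → ℝ) : Prop :=
  ∀ i j, 0 < X i → X i ≤ X j + (Pi.single 0 α : Fin n → ℝ) j

lemma cost_eq_sum_mul_tauA (τ : Fin n → ℝ → ℝ) (x : Fin n → ℝ) :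
    cost n τ α x = (∑ i, x i * tauA n τ α i (x i)) / n := by
  simp [cost, tauA, mul_add, Finset.sum_add_distrib, add_div, mul_comm]

lemma tauA_lin (i : Fin n) (z : ℝ) :
    tauA n (lin n) α i z = z + (Pi.single 0 α : Fin n → ℝ) i := by
  simp [tauA, lin, Pi.single_apply]

lemma cost_lin_moveMass (x : Fin n → ℝ) {i j : Fin n} (hij : i ≠ j) (ε : ℝ) :
    cost n (lin n) α (moveMass i j ε x)
      = cost n (lin n) α x + ε * (marginalCost α x j - marginalCost α x i + 2 * ε) / n := by
  simp only [cost_eq_sum_mul_tauA, tauA_lin, sum_moveMass_mul_add _ _ hij, marginalCost]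
  ring

namespace IsTeamEq

variable {τ : Fin n → ℝ → ℝ} {r : Fin m → ℝ} {xs : Fin n → ℝ} {xk : Fin m → Fin n → ℝ}

lemma isProfile (h : IsTeamEq n m τ α r xs xk) : IsProfile n n (xs + ∑ k, xk k) := by
  obtain ⟨⟨hxs0, hxs⟩, hxk, -, -⟩ := h
  refine ⟨fun i => ?_, ?_⟩
  · simpa [Finset.sum_apply] using add_nonneg (hxs0 i) (Finset.sum_nonneg fun k _ => (hxk k).1 i)
  · simp only [Pi.add_apply, Finset.sum_apply, Finset.sum_add_distrib, hxs]
    rw [Finset.sum_comm, Finset.sum_congr rfl fun k _ => (hxk k).2]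
    ring

lemma marginalCost_le (h : IsTeamEq n m (lin n) α r xs xk) {k : Fin m} {i : Fin n}
    (hk : 0 < xk k i) (j : Fin n) :
    marginalCost α (xs + ∑ l, xk l) i ≤ marginalCost α (xs + ∑ l, xk l) j := by
  rcases eq_or_ne i j with rfl | hij
  · rfl
  set X := xs + ∑ l, xk l
  have hregroup :
      ∀ ε, xs + moveMass i j ε (xk k) + ∑ l ∈ univ.erase k, xk l = moveMass i j ε X := by
    intro ε
    simp only [moveMass, X, ← Finset.add_sum_erase univ xk (mem_univ k)]
    abel
  have hgain : ∀ ε, 0 < ε → ε ≤ xk k i →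
      0 ≤ (marginalCost α X j - marginalCost α X i) + 2 * ε := by
    intro ε hε hεi
    have hopt := h.2.2.1 k _ ((h.2.1 k).moveMass (j := j) hε.le hεi)
    rw [hregroup, cost_lin_moveMass _ hij] at hopt
    have hdiv : 0 ≤ ε * (marginalCost α X j - marginalCost α X i + 2 * ε) / n := by linarith
    have hn : (0 : ℝ) < n := Nat.cast_pos.2 (NeZero.pos n)
    exact nonneg_of_mul_nonneg_right (by simpa using (le_div_iff₀ hn).1 hdiv) hε
  linarith [nonneg_of_forall_mem_Ioc_nonneg_add_mul hk hgain]

lemma selfish_le (h : IsTeamEq n m (lin n) α r xs xk) {i : Fin n} (hi : 0 < xs i) (j : Fin n) :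
    (xs + ∑ l, xk l) i + (Pi.single 0 α : Fin n → ℝ) i
      ≤ (xs + ∑ l, xk l) j + (Pi.single 0 α : Fin n → ℝ) j := by
  simpa only [tauA_lin] using h.2.2.2 i hi j

lemma isLoadBalanced (h : IsTeamEq n m (lin n) α r xs xk) (hα : 0 ≤ α) :
    IsLoadBalanced α (xs + ∑ l, xk l) := by
  intro i j hi
  have hs : ∀ l, 0 ≤ (Pi.single 0 α : Fin n → ℝ) l :=
    fun l => (Pi.single_nonneg.2 hα : (0 : Fin n → ℝ) ≤ Pi.single 0 α) l
  have hsupply : 0 < xs i ∨ ∃ k, 0 < xk k i := by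
    by_contra! hnone
    have : (xs + ∑ l, xk l) i ≤ 0 := by
      simpa [Finset.sum_apply] using add_nonpos hnone.1 (Finset.sum_nonpos fun k _ => hnone.2 k)
    linarith
  rcases hsupply with hself | ⟨k, hk⟩
  · linarith [h.selfish_le hself j, hs i]
  · have := h.marginalCost_le hk j
    simp only [marginalCost] at this
    linarith [hs i, hs j]

end IsTeamEq

namespace IsLoadBalanced

variable {X : Fin n → ℝ}

lemma pos_of_ne_zero (h : IsLoadBalanced α X) (hX : IsProfile n n X) {j : Fin n} (hj : j ≠ 0) :
    0 < X j := by
  obtain ⟨i, -, hi⟩ : ∃ i ∈ univ, (0 : Fin n → ℝ) i < X i := by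
    refine Finset.exists_lt_of_sum_lt ?_
    simpa [hX.2] using NeZero.pos n
  simpa [Pi.single_eq_of_ne hj] using (h i j hi).trans_lt' hi

lemma le_of_ne_zero (h : IsLoadBalanced α X) (hX : IsProfile n n X) {i j : Fin n} (hi : i ≠ 0)
    (hj : j ≠ 0) : X i ≤ X j := by
  simpa [Pi.single_eq_of_ne hj] using h i j (h.pos_of_ne_zero hX hi)

lemma apply_zero_le (h : IsLoadBalanced α X) (hX : IsProfile n n X) {j : Fin n} (hj : j ≠ 0) :
    X 0 ≤ X j := by
  rcases (hX.1 0).lt_or_eq with h0 | h0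
  · simpa [Pi.single_eq_of_ne hj] using h 0 j h0
  · linarith [h.pos_of_ne_zero hX hj]

lemma le_apply_zero_add (h : IsLoadBalanced α X) (hX : IsProfile n n X) {j : Fin n}
    (hj : j ≠ 0) : X j ≤ X 0 + α := by
  simpa using h j 0 (h.pos_of_ne_zero hX hj)

lemma sum_mul_add_single_le (h : IsLoadBalanced α X) (hX : IsProfile n n X) (hn : 2 ≤ n) :
    ∑ i, X i * (X i + (Pi.single 0 α : Fin n → ℝ) i) ≤ n + α := by
  have hj₁ : (⟨1, hn⟩ : Fin n) ≠ 0 := Fin.ne_of_val_ne one_ne_zero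
  set c := X ⟨1, hn⟩
  have hconst : ∀ j ≠ 0, X j = c := fun j hj =>
    (h.le_of_ne_zero hX hj hj₁).antisymm (h.le_of_ne_zero hX hj₁ hj)
  have hsum := sum_eq_card_mul_add_of_forall_ne X 0 hconst
  have hsq := sum_eq_card_mul_add_of_forall_ne
    (fun i => X i * (X i + (Pi.single 0 α : Fin n → ℝ) i)) 0 (c := c * c)
    fun j hj => by simp [Pi.single_eq_of_ne hj, hconst j hj]
  simp only [Fintype.card_fin, hX.2, Pi.single_eq_same] at hsum hsq
  rw [hsq]
  exact two_level_bound (by exact_mod_cast (NeZero.pos n)) hsum.symm (h.apply_zero_le hX hj₁)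
    (h.le_apply_zero_add hX hj₁)

end IsLoadBalanced

end Servers

theorem linear_weak_emergent_security_general (n m : ℕ) [NeZero n] (hn : 2 ≤ n)
    (α : ℝ) (hα : 0 ≤ α)
    (r : Fin m → ℝ) :
    cost n (lin n) α (fun _ : Fin n => (1 : ℝ)) = 1 + α / n ∧
    ∀ (xs : Fin n → ℝ) (xk : Fin m → Fin n → ℝ), IsTeamEq n m (lin n) α r xs xk →
      cost n (lin n) α (xs + ∑ j, xk j) ≤ 1 + α / n := by
  have hn0 : (0 : ℝ) < n := Nat.cast_pos.2 (NeZero.pos n)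
  refine ⟨by simp [cost, lin], fun xs xk h => ?_⟩
  have hbound := (h.isLoadBalanced hα).sum_mul_add_single_le h.isProfile hn
  rw [cost_eq_sum_mul_tauA, div_le_iff₀ hn0, add_mul, div_mul_cancel₀ _ hn0.ne', one_mul]
  simpa only [tauA_lin] using hbound

/-- weak emergent security for identical linear servers: every team
equilibrium costs at most the unresponsive baseline cost `C^α((1,…,1)) = 1 + α/n`. -/
theorem linear_weak_emergent_security (n m : ℕ) [NeZero n] (hn : 2 ≤ n) (hm : 1 ≤ m)
    (α : ℝ) (hα : 0 ≤ α)
    (r : Fin m → ℝ) (hr : ∀ k, 0 ≤ r k)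
    (hr0 : 0 ≤ ∑ k, r k) (hrsum : ∑ k, r k ≤ (n : ℝ)) :
    cost n (lin n) α (fun _ : Fin n => (1 : ℝ)) = 1 + α / n ∧
    ∀ (xs : Fin n → ℝ) (xk : Fin m → Fin n → ℝ), IsTeamEq n m (lin n) α r xs xk →
      cost n (lin n) α (xs + ∑ j, xk j) ≤ 1 + α / n :=
  linear_weak_emergent_security_general n m hn α hα r
end

section
/- In the constrained Stackelberg setting with n ≥ 3 identical linear servers, for every attack strength α ≥ 0 there exists an optimal Stackelberg equilibrium (x^m, x^s) whose aggregate profile x = x^m + x^s satisfies x_1 + α ≥ x_2. -/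
open Finset

/-- Feasible machine (leader) policy: nonnegative, nothing on server 1 (index 0),
total mass `n - 1` on servers 2,…,n. -/
def MachPolicy (n : ℕ) [NeZero n] (xm : Fin n → ℝ) : Prop :=
  (∀ i, 0 ≤ xm i) ∧ xm 0 = 0 ∧ ∑ i, xm i = (n : ℝ) - 1

/-- Feasible selfish (follower) profile: mass 1 split between servers 1 and 2. -/
def SelfFeasible (n : ℕ) [NeZero n] (xs : Fin n → ℝ) : Prop :=
  (∀ i, 0 ≤ xs i) ∧ xs 0 + xs 1 = 1 ∧ ∀ i, i ≠ 0 → i ≠ 1 → xs i = 0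

/-- Nash response of the selfish jobs to the machine policy `xm`. -/
def NashResp (n : ℕ) [NeZero n] (α : ℝ) (xm xs : Fin n → ℝ) : Prop :=
  SelfFeasible n xs ∧
  (0 < xs 0 → xs 0 + α ≤ xs 1 + xm 1) ∧
  (0 < xs 1 → xs 1 + xm 1 ≤ xs 0 + α)

/-- Optimal Stackelberg equilibrium. -/
def OptStackEq (n : ℕ) [NeZero n] (α : ℝ) (xm xs : Fin n → ℝ) : Prop :=
  MachPolicy n xm ∧ NashResp n α xm xs ∧
  ∀ ym ys : Fin n → ℝ, MachPolicy n ym → NashResp n α ym ys →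
    cost n (lin n) α (xm + xs) ≤ cost n (lin n) α (ym + ys)

/-!
Optimal Stackelberg equilibria exist because the feasible pairs form a nonempty compact set
and the cost is continuous. At a minimiser, suppose `x₂ > x₁ + α`. Then no selfish job uses
server 2, so `x₁ = 1` and the leader alone puts `x₂ > 1 + α` there. Since the total load is `n`,
some other server carries less than `1`, and moving the excess `x₂ - (1 + α)` to it keeps the
followers' Nash response valid while strictly lowering the sum of squared loads.
-/

section Profiles

variable {n : ℕ} {m : ℝ} {x : Fin n → ℝ}

theorem IsProfile.le (hx : IsProfile n m x) (i : Fin n) : x i ≤ m :=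
  hx.2 ▸ single_le_sum (fun j _ => hx.1 j) (mem_univ i)

theorem IsProfile.add {m' : ℝ} {y : Fin n → ℝ} (hx : IsProfile n m x) (hy : IsProfile n m' y) :
    IsProfile n (m + m') (x + y) :=
  ⟨fun i => add_nonneg (hx.1 i) (hy.1 i), by simp only [Pi.add_apply, sum_add_distrib, hx.2, hy.2]⟩

theorem isCompact_setOf_isProfile (n : ℕ) (m : ℝ) :
    IsCompact {x : Fin n → ℝ | IsProfile n m x} := by
  refine isCompact_Icc.of_isClosed_subset ?_ fun x hx => ⟨hx.1, hx.le⟩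
  simp only [IsProfile, Set.ofPred_and, Set.ofPred_forall]
  exact (isClosed_iInter fun i => isClosed_le continuous_const (continuous_apply i)).inter
    (isClosed_eq (by fun_prop) continuous_const)

end Profiles

theorem exists_lt_one_of_sum_eq_card {ι : Type*} [Fintype ι] {x : ι → ℝ}
    (hsum : ∑ k, x k = Fintype.card ι) {i : ι} (hi : 1 < x i) : ∃ j, x j < 1 := by
  by_contra! h
  have := sum_lt_sum (fun j _ => h j) ⟨i, mem_univ i, hi⟩
  simp [hsum] at this

theorem sum_sq_add_single_sub_single {ι : Type*} [Fintype ι] [DecidableEq ι] (x : ι → ℝ)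
    {i j : ι} (hij : i ≠ j) (d : ℝ) :
    ∑ k, (x + Pi.single j d - Pi.single i d : ι → ℝ) k ^ 2
      = ∑ k, x k ^ 2 + 2 * d * (x j + d - x i) := by
  have hdiff : ∑ k, ((x + Pi.single j d - Pi.single i d : ι → ℝ) k ^ 2 - x k ^ 2)
      = 2 * d * (x j + d - x i) := by
    rw [Fintype.sum_eq_add i j hij fun k hk => by simp [hk.1, hk.2]]
    simp [hij, hij.symm]
    ring
  rw [← hdiff, sum_sub_distrib]
  ring

theorem isClosed_setOf_pos_imp_le {X : Type*} [TopologicalSpace X] {f g h : X → ℝ}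
    (hf : Continuous f) (hg : Continuous g) (hh : Continuous h) :
    IsClosed {x | 0 < f x → g x ≤ h x} := by
  have : {x | 0 < f x → g x ≤ h x} = {x | f x ≤ 0} ∪ {x | g x ≤ h x} := by
    ext x
    simp only [Set.mem_ofPred_eq, Set.mem_union, imp_iff_not_or, not_lt]
  rw [this]
  exact (isClosed_le hf continuous_const).union (isClosed_le hg hh)

section Stackelberg

variable {n : ℕ} [NeZero n] {α : ℝ}

def feasiblePairs (n : ℕ) [NeZero n] (α : ℝ) : Set ((Fin n → ℝ) × (Fin n → ℝ)) :=
  {p | MachPolicy n p.1 ∧ NashResp n α p.1 p.2}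

noncomputable def pairCost (n : ℕ) [NeZero n] (α : ℝ) (p : (Fin n → ℝ) × (Fin n → ℝ)) : ℝ :=
  cost n (lin n) α (p.1 + p.2)

theorem continuous_pairCost : Continuous (pairCost n α) := by
  unfold pairCost cost lin
  fun_prop

theorem cost_lin (x : Fin n → ℝ) : cost n (lin n) α x = (∑ i, x i ^ 2 + α * x 0) / n := by
  simp only [cost, lin, sq]
  ring

theorem cost_add_single_sub_single_lt (x : Fin n → ℝ) {i j : Fin n} (hi : i ≠ 0) (hj : j ≠ 0)
    (hij : i ≠ j) {d : ℝ} (hd : 0 < d) (hlt : x j + d < x i) :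
    cost n (lin n) α (x + Pi.single j d - Pi.single i d) < cost n (lin n) α x := by
  have hx0 : (x + Pi.single j d - Pi.single i d : Fin n → ℝ) 0 = x 0 := by
    simp [hi.symm, hj.symm]
  have hn : (0 : ℝ) < n := Nat.cast_pos.2 (NeZero.pos n)
  rw [cost_lin, cost_lin, sum_sq_add_single_sub_single x hij, hx0]
  gcongr
  nlinarith

theorem MachPolicy.isProfile {xm : Fin n → ℝ} (h : MachPolicy n xm) : IsProfile n (n - 1) xm :=
  ⟨h.1, h.2.2⟩

theorem MachPolicy.add_single_sub_single {xm : Fin n → ℝ} (h : MachPolicy n xm) {i j : Fin n}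
    (hi : i ≠ 0) (hj : j ≠ 0) {d : ℝ} (hd : 0 ≤ d) (hdi : d ≤ xm i) :
    MachPolicy n (xm + Pi.single j d - Pi.single i d) := by
  refine ⟨fun k => ?_, by simp [hi.symm, hj.symm, h.2.1], ?_⟩
  · have hj : 0 ≤ (Pi.single j d : Fin n → ℝ) k := (Pi.single_nonneg (α := fun _ => ℝ)).2 hd k
    by_cases hk : k = i
    · subst hk
      simp only [Pi.sub_apply, Pi.add_apply, Pi.single_eq_same]
      linarith
    · simp only [Pi.sub_apply, Pi.add_apply, Pi.single_eq_of_ne hk]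
      linarith [h.1 k]
  · simp only [Pi.sub_apply, Pi.add_apply, sum_sub_distrib, sum_add_distrib, sum_pi_single',
      mem_univ, if_true, h.2.2]
    ring

theorem NashResp.eq_zero_of_lt {xm xs : Fin n → ℝ} (h : NashResp n α xm xs)
    (hlt : xs 0 + α < xs 1 + xm 1) : xs 1 = 0 :=
  (h.1.1 1).eq_of_not_lt' fun hpos => (h.2.2 hpos).not_gt hlt

theorem isClosed_feasiblePairs : IsClosed (feasiblePairs n α) := by
  simp only [feasiblePairs, MachPolicy, NashResp, SelfFeasible, Set.ofPred_and, Set.ofPred_forall]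
  repeat' first
    | apply IsClosed.inter
    | (apply isClosed_iInter; intro _)
    | apply isClosed_setOf_pos_imp_le
    | apply isClosed_le
    | apply isClosed_eq
  all_goals fun_prop

variable (h01 : (0 : Fin n) ≠ 1)
include h01

theorem SelfFeasible.isProfile {xs : Fin n → ℝ} (h : SelfFeasible n xs) : IsProfile n 1 xs :=
  ⟨h.1, by rw [Fintype.sum_eq_add 0 1 h01 fun k hk => h.2.2 k hk.1 hk.2, h.2.1]⟩

theorem exists_nashResp (xm : Fin n → ℝ) : ∃ xs, NashResp n α xm xs := by
  -- the split equalising the two delays, clamped to `[0, 1]`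
  set t := max 0 (min 1 ((1 + xm 1 - α) / 2))
  refine ⟨fun i => if i = 0 then t else if i = 1 then 1 - t else 0,
    ⟨fun i => ?_, ?_, ?_⟩, ?_, ?_⟩
  all_goals simp only [h01.symm, if_true, if_false, ne_eq]
  · split_ifs <;> simp [t]
  · ring
  · intro i hi0 hi1; simp [hi0, hi1]
  all_goals
    intro ht
    simp only [t, max_def, min_def] at ht ⊢
    split_ifs at ht ⊢ <;> linarith

theorem feasiblePairs_nonempty : (feasiblePairs n α).Nonempty := by
  have hn : (1 : ℝ) ≤ n := by exact_mod_cast NeZero.one_le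
  have hxm : MachPolicy n (Pi.single 1 ((n : ℝ) - 1)) :=
    ⟨(Pi.single_nonneg (α := fun _ => ℝ)).2 (sub_nonneg.2 hn), Pi.single_eq_of_ne h01 _, by simp⟩
  obtain ⟨xs, hxs⟩ := exists_nashResp h01 (α := α) (Pi.single 1 ((n : ℝ) - 1))
  exact ⟨(_, xs), hxm, hxs⟩

theorem isCompact_feasiblePairs : IsCompact (feasiblePairs n α) :=
  ((isCompact_setOf_isProfile n _).prod (isCompact_setOf_isProfile n 1)).of_isClosed_subset
    isClosed_feasiblePairs fun _ hp => ⟨hp.1.isProfile, hp.2.1.isProfile h01⟩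

theorem aggregate_one_le_of_isMinOn (hα : 0 ≤ α) {xm xs : Fin n → ℝ}
    (hp : (xm, xs) ∈ feasiblePairs n α)
    (hmin : IsMinOn (pairCost n α) (feasiblePairs n α) (xm, xs)) :
    (xm + xs) 1 ≤ (xm + xs) 0 + α := by
  obtain ⟨hm, hs⟩ : MachPolicy n xm ∧ NashResp n α xm xs := hp
  set x := xm + xs
  by_contra! hgt
  have hxs1 : xs 1 = 0 := hs.eq_zero_of_lt (by simpa [x, hm.2.1, add_comm] using hgt)
  have hxs0 : xs 0 = 1 := by linarith [hs.1.2.1]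
  have hx0 : x 0 = 1 := by simp [x, hm.2.1, hxs0]
  have hx1 : x 1 = xm 1 := by simp [x, hxs1]
  have hsum : ∑ k, x k = Fintype.card (Fin n) := by
    rw [(hm.isProfile.add (hs.1.isProfile h01)).2, Fintype.card_fin]
    ring
  obtain ⟨j, hj⟩ := exists_lt_one_of_sum_eq_card hsum (i := 1) (by linarith)
  have hj0 : j ≠ 0 := by rintro rfl; linarith
  have hj1 : j ≠ 1 := by rintro rfl; linarith
  set d := xm 1 - (1 + α)
  have hd : 0 < d := by linarith
  have hym1 : (xm + Pi.single j d - Pi.single 1 d : Fin n → ℝ) 1 = 1 + α := by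
    simp [Pi.single_eq_of_ne (Ne.symm hj1), d]
  have hfeas : (xm + Pi.single j d - Pi.single 1 d, xs) ∈ feasiblePairs n α :=
    ⟨hm.add_single_sub_single h01.symm hj0 hd.le (by linarith),
      hs.1, fun _ => by dsimp only; rw [hym1, hxs0, hxs1]; linarith, fun h => absurd hxs1 h.ne'⟩
  have hagg : xm + Pi.single j d - Pi.single 1 d + xs = x + Pi.single j d - Pi.single 1 d := by
    simp only [x]; abel
  have hle : pairCost n α (xm, xs) ≤ pairCost n α (_, xs) := hmin hfeas
  have hlt :=
    cost_add_single_sub_single_lt (α := α) x h01.symm hj0 (Ne.symm hj1) hd (by linarith)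
  simp only [pairCost, hagg] at hle
  linarith

end Stackelberg

/-- for every attack strength there is an optimal Stackelberg
equilibrium whose aggregate profile satisfies `x₁ + α ≥ x₂`. -/
theorem opt_stackelberg_exists_with_constraint (n : ℕ) [NeZero n] (hn : 3 ≤ n)
    (α : ℝ) (hα : 0 ≤ α) :
    ∃ xm xs : Fin n → ℝ, OptStackEq n α xm xs ∧
      (xm + xs) 1 ≤ (xm + xs) 0 + α := by
  have h01 : (0 : Fin n) ≠ 1 := by simp [Fin.ext_iff, Nat.mod_eq_of_lt (by omega : 1 < n)]
  obtain ⟨⟨xm, xs⟩, hp, hmin⟩ := (isCompact_feasiblePairs h01 (α := α)).exists_isMinOn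
    (feasiblePairs_nonempty h01) continuous_pairCost.continuousOn
  refine ⟨xm, xs, ⟨hp.1, hp.2, fun ym ys hym hys => ?_⟩, aggregate_one_le_of_isMinOn h01 hα hp hmin⟩
  exact hmin (show (ym, ys) ∈ feasiblePairs n α from ⟨hym, hys⟩)
end
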